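/- Let p be a prime number, let X = ℤ/(p) × ℤ/(p), and let (X,r) be an indecomposable and irretractable solution of the YBE such that r((i,j),(k,l)) = (σ_{(i,j)}(k,l), σ_{σ_{(i,j)}(k,l)}⁻¹(i,j)) with σ_{(i,j)}(k,l) = (σ_j(k), d_{i,σ_j(k)}(l)) for some families of permutations σ_j and d_{i,k} of ℤ/(p). Let F = ⟨σ_j : j ∈ ℤ/(p)⟩ ≤ Sym(ℤ/(p)) and W = ⟨d_{i,k} : i,k ∈ ℤ/(p)⟩ ≤ Sym(ℤ/(p)). Then F has order p (equivalently, F is cyclic of order p) if and only if W has order p. -/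

import Mathlib

open Function

/-- The map `r₁₂ = r × id` on `X³`. -/
def yb12 {X : Type*} (r : X × X → X × X) : X × X × X → X × X × X :=
  fun p => ((r (p.1, p.2.1)).1, ((r (p.1, p.2.1)).2, p.2.2))

/-- The map `r₂₃ = id × r` on `X³`. -/
def yb23 {X : Type*} (r : X × X → X × X) : X × X × X → X × X × X :=
  fun p => (p.1, r p.2)

/-- `(X, r)` is an involutive non-degenerate set-theoretic solution of the
Yang–Baxter equation. -/
structure IsYBSolution {X : Type*} (r : X × X → X × X) : Prop where
  invol : ∀ p, r (r p) = p
  sigma_bij : ∀ x, Function.Bijective (fun y => (r (x, y)).1)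
  gamma_bij : ∀ y, Function.Bijective (fun x => (r (x, y)).2)
  braid : yb12 r ∘ yb23 r ∘ yb12 r = yb23 r ∘ yb12 r ∘ yb23 r

/-- A homomorphism of solutions: `f (σ_x y) = σ'_{f x} (f y)`. -/
def IsSolHom {X Y : Type*} (r : X × X → X × X) (s : Y × Y → Y × Y) (f : X → Y) : Prop :=
  ∀ x y, f (r (x, y)).1 = (s (f x, f y)).1

/-- The permutation group `G(X,r)`: the subgroup of `Sym(X)` generated by the
permutations `σ_x`. -/
def permGroup {X : Type*} (r : X × X → X × X) : Subgroup (Equiv.Perm X) :=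
  Subgroup.closure {g : Equiv.Perm X | ∃ x, ∀ y, g y = (r (x, y)).1}

/-- `(X,r)` is indecomposable: `G(X,r)` acts transitively on `X`. -/
def IsIndecomposable {X : Type*} (r : X × X → X × X) : Prop :=
  ∀ x y : X, ∃ g ∈ permGroup r, g x = y

/-- `(X,r)` is irretractable: `σ_x = σ_y` implies `x = y`. -/
def IsIrretractable {X : Type*} (r : X × X → X × X) : Prop :=
  ∀ x y : X, (∀ z, (r (x, z)).1 = (r (y, z)).1) → x = y

/-- `(X,r)` is a simple solution: `|X| > 1` and every surjective homomorphism of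
solutions from `(X,r)` is either bijective or has a one-element target. -/
def IsSimpleSolution {X : Type u} (r : X × X → X × X) : Prop :=
  Nontrivial X ∧ ∀ (Y : Type u) (s : Y × Y → Y × Y), IsYBSolution s →
    ∀ f : X → Y, Function.Surjective f → IsSolHom r s f →
      Function.Bijective f ∨ Subsingleton Y

/-!
Read on first coordinates, the braid relation says `σ_j σ_l = σ_{d_{i,m}(l)} σ_{d_{m,i}⁻¹(j)}`
for all `i, m, j, l`.

If `F` has order `p` it is abelian, and this identity makes every `d_{i,m}` a left shift of `σ`:
`σ ∘ d_{i,m} = β · σ` with `β ∈ F`. As `σ` is injective (irretractability), `w ↦ β` embeds `W`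
into `F`, and `W ≠ 1` (irretractability again), so `|W| = p`.

Conversely, comparing the identity for two distinct `d_{i,m} ≠ d_{i',m'}` produces `α` with
`σ ∘ T = σ · α` and `σ ∘ S = α · σ` for some `T ≠ 1` and `S` in `W`. If `|W| = p` then `T`
generates `W`, so every element of `W` is a right shift of `σ` by a power of `α`, and
`σ_m⁻¹ α σ_m = α^n` for a fixed `n`. The identity becomes `σ_j σ_l = σ_l σ_j α^N` with `α^N = 1`,
so `F` is abelian. Being transitive (indecomposability), `F` then acts regularly and `|F| = p`.
-/

open Equiv Subgroup

section ShiftedFactorizations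

variable {X G : Type*} [Group G] (σ : X → G)

def shiftSubgroup (K : Subgroup G) : Subgroup (Perm X) where
  carrier := {w | ∃ β ∈ K, ∀ m, σ (w m) = β * σ m}
  one_mem' := ⟨1, K.one_mem, fun m => (one_mul _).symm⟩
  mul_mem' := by
    rintro w w' ⟨β, hβ, h⟩ ⟨β', hβ', h'⟩
    exact ⟨β * β', K.mul_mem hβ hβ', fun m => by rw [Perm.mul_apply, h, h', mul_assoc]⟩
  inv_mem' := by
    rintro w ⟨β, hβ, h⟩
    refine ⟨β⁻¹, K.inv_mem hβ, fun m => ?_⟩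
    rw [eq_inv_mul_iff_mul_eq, ← h]
    exact congrArg σ (w.apply_symm_apply m)

variable {σ} in
lemma apply_eq_of_mem_shiftSubgroup {K : Subgroup G} {w : Perm X} (hw : w ∈ shiftSubgroup σ K)
    (x m : X) : σ (w m) = σ (w x) * (σ x)⁻¹ * σ m := by
  obtain ⟨β, -, h⟩ := hw
  rw [h, h, mul_inv_cancel_right]

def shiftSubgroup.shift (K : Subgroup G) (x₀ : X) : shiftSubgroup σ K →* K :=
  MonoidHom.mk' (fun w => ⟨σ (w.1 x₀) * (σ x₀)⁻¹, by
      obtain ⟨β, hβ, h⟩ := w.2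
      rwa [h, mul_inv_cancel_right]⟩)
    fun w w' => Subtype.ext <| by
      simp only [Subgroup.coe_mul, Perm.mul_apply]
      rw [apply_eq_of_mem_shiftSubgroup w.2 x₀]
      group

lemma shiftSubgroup.shift_injective (hσ : Injective σ) (K : Subgroup G) (x₀ : X) :
    Injective (shiftSubgroup.shift σ K x₀) := by
  intro w w' h
  have h' : σ (w.1 x₀) * (σ x₀)⁻¹ = σ (w'.1 x₀) * (σ x₀)⁻¹ := congrArg Subtype.val h
  ext m
  apply hσ
  rw [apply_eq_of_mem_shiftSubgroup w.2 x₀, apply_eq_of_mem_shiftSubgroup w'.2 x₀, h']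

lemma card_shiftSubgroup_dvd [Nonempty X] (hσ : Injective σ) (K : Subgroup G) :
    Nat.card (shiftSubgroup σ K) ∣ Nat.card K :=
  Subgroup.card_dvd_of_injective _ (shiftSubgroup.shift_injective σ hσ K (Classical.arbitrary X))

lemma exists_shift_of_factorizations [Nonempty X] {A A' B B' : Perm X}
    (h : ∀ j l, σ j * σ l = σ (A l) * σ (B j)) (h' : ∀ j l, σ j * σ l = σ (A' l) * σ (B' j)) :
    ∃ α, (∀ m, σ ((A * A'⁻¹) m) = σ m * α) ∧ ∀ m, σ ((B' * B⁻¹) m) = α * σ m := by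
  obtain ⟨x₀⟩ := ‹Nonempty X›
  have key : ∀ l j, (σ (A' l))⁻¹ * σ (A l) = σ (B' j) * (σ (B j))⁻¹ := by
    intro l j
    rw [inv_mul_eq_iff_eq_mul, ← mul_assoc, eq_mul_inv_iff_mul_eq, ← h, h']
  refine ⟨(σ (A' x₀))⁻¹ * σ (A x₀), fun m => ?_, fun m => ?_⟩
  · rw [key x₀ x₀, ← key (A'⁻¹ m) x₀, Perm.mul_apply,
      show A' (A'⁻¹ m) = m from A'.apply_symm_apply m, mul_inv_cancel_left]
  · rw [key x₀ (B⁻¹ m), Perm.mul_apply, show B (B⁻¹ m) = m from B.apply_symm_apply m,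
      inv_mul_cancel_right]

lemma apply_pow_eq_mul_pow {T : Perm X} {α : G} (hT : ∀ m, σ (T m) = σ m * α) (k : ℕ) (m : X) :
    σ ((T ^ k) m) = σ m * α ^ k := by
  induction k generalizing m with
  | zero => simp
  | succ k ih => rw [pow_succ, Perm.mul_apply, ih, hT, mul_assoc, ← pow_succ']

lemma commute_of_factorizations_of_card_eq_prime {p : ℕ} [Fact p.Prime] [Nonempty X]
    {W : Subgroup (Perm X)} (hW : Nat.card W = p) {A A' B B' : Perm X}
    (hA : A ∈ W) (hA' : A' ∈ W) (hB : B ∈ W) (hB' : B' ∈ W) (hAA' : A ≠ A')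
    (h : ∀ j l, σ j * σ l = σ (A l) * σ (B j)) (h' : ∀ j l, σ j * σ l = σ (A' l) * σ (B' j))
    (j l : X) : Commute (σ j) (σ l) := by
  obtain ⟨α, hT, hS⟩ := exists_shift_of_factorizations σ h h'
  have hpow : ∀ w ∈ W, ∃ k : ℕ, ∀ m, σ (w m) = σ m * α ^ k := by
    intro w hw
    have hT1 : (⟨A * A'⁻¹, W.mul_mem hA (W.inv_mem hA')⟩ : W) ≠ 1 :=
      fun h1 => hAA' (mul_inv_eq_one.mp (congrArg Subtype.val h1))
    obtain ⟨k, hk⟩ := mem_powers_of_prime_card hW hT1 (g' := ⟨w, hw⟩)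
    refine ⟨k, fun m => ?_⟩
    rw [← show (A * A'⁻¹) ^ k = w from congrArg Subtype.val hk]
    exact apply_pow_eq_mul_pow σ hT k m
  obtain ⟨n, hn⟩ := hpow _ (W.mul_mem hB' (W.inv_mem hB))
  obtain ⟨a, ha⟩ := hpow A hA
  obtain ⟨b, hb⟩ := hpow B hB
  have hconj : ∀ m, (σ m)⁻¹ * α ^ a * σ m = α ^ (n * a) := by
    intro m
    have h1 : (σ m)⁻¹ * α * σ m = α ^ n := by rw [mul_assoc, ← hS, hn, inv_mul_cancel_left]
    rw [pow_mul, ← h1]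
    simpa using (conj_pow (a := (σ m)⁻¹) (b := α) (i := a)).symm
  have hswap : ∀ x y, σ x * σ y = σ y * σ x * α ^ (n * a + b) := by
    intro x y
    calc σ x * σ y = σ y * α ^ a * (σ x * α ^ b) := by rw [h, ha, hb]
      _ = σ y * σ x * ((σ x)⁻¹ * α ^ a * σ x) * α ^ b := by group
      _ = σ y * σ x * α ^ (n * a + b) := by rw [hconj, pow_add, mul_assoc (σ y * σ x)]
  have hα : α ^ (n * a + b) = 1 := left_eq_mul.mp (hswap j j)
  rw [Commute, SemiconjBy, hswap, hα, mul_one]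

lemma mem_shiftSubgroup_of_commute_of_factorization [Nonempty X] {A B : Perm X}
    (hσ : ∀ j l, Commute (σ j) (σ l)) (h : ∀ j l, σ j * σ l = σ (A l) * σ (B j)) :
    A ∈ shiftSubgroup σ (closure (Set.range σ)) := by
  obtain ⟨x₀⟩ := ‹Nonempty X›
  have mem : ∀ x, σ x ∈ closure (Set.range σ) := fun x => subset_closure ⟨x, rfl⟩
  refine ⟨σ x₀ * (σ (B x₀))⁻¹, mul_mem (mem x₀) (inv_mem (mem _)), fun l => ?_⟩
  calc σ (A l) = σ x₀ * (σ l * (σ (B x₀))⁻¹) := by rw [← mul_assoc, h x₀ l, mul_inv_cancel_right]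
    _ = σ x₀ * (σ (B x₀))⁻¹ * σ l := by rw [((hσ l (B x₀)).inv_right).eq, mul_assoc]

end ShiftedFactorizations

lemma Subgroup.card_eq_card_of_isMulCommutative {X : Type*} [Nonempty X] (F : Subgroup (Perm X))
    [IsMulCommutative F] (htrans : ∀ x y, ∃ g ∈ F, g x = y) : Nat.card F = Nat.card X := by
  obtain ⟨x₀⟩ := ‹Nonempty X›
  refine Nat.card_eq_of_bijective (fun f : F => (f : Perm X) x₀) ⟨fun f g hfg => ?_, fun y => ?_⟩
  · ext y
    obtain ⟨t, ht, rfl⟩ := htrans x₀ y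
    calc (f : Perm X) (t x₀) = t ((f : Perm X) x₀) := Perm.ext_iff.mp (setLike_mul_comm f.2 ht) x₀
      _ = t ((g : Perm X) x₀) := congrArg t hfg
      _ = (g : Perm X) (t x₀) := Perm.ext_iff.mp (setLike_mul_comm ht g.2) x₀
  · obtain ⟨g, hg, hgy⟩ := htrans x₀ y
    exact ⟨⟨g, hg⟩, hgy⟩

section Solutions

variable {X : Type*} {σ : X → Perm X} {d : X → X → Perm X}
  {r : (X × X) × (X × X) → (X × X) × (X × X)}

def IsSkewProductForm (σ : X → Perm X) (d : X → X → Perm X)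
    (r : (X × X) × (X × X) → (X × X) × (X × X)) : Prop :=
  ∀ i j k l : X, r ((i, j), (k, l)) = ((σ j k, d i (σ j k) l),
    ((σ (d i (σ j k) l))⁻¹ i, (d (σ j k) i)⁻¹ j))

lemma IsSkewProductForm.mul_eq_mul (hr : IsSkewProductForm σ d r) (hsol : IsYBSolution r)
    (i m j l : X) : σ j * σ l = σ (d i m l) * σ ((d m i)⁻¹ j) := by
  unfold IsSkewProductForm at hr
  ext a
  have hb := congrArg (fun t => t.1.1) (congrFun hsol.braid ((i, j), ((σ j)⁻¹ m, l), (a, a)))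
  simp only [Function.comp_apply, yb12, yb23, hr] at hb
  simpa [Perm.mul_apply] using hb.symm

lemma IsSkewProductForm.injective (hr : IsSkewProductForm σ d r) (hirr : IsIrretractable r) :
    Injective σ := by
  intro j j' h
  have := hirr (j, j) (j, j') fun z => by rw [hr, hr, h]
  exact (Prod.ext_iff.mp this).2

lemma IsSkewProductForm.exists_ne [Nontrivial X] (hr : IsSkewProductForm σ d r)
    (hirr : IsIrretractable r) : ∃ i m i' m', d i m ≠ d i' m' := by
  by_contra! hd
  obtain ⟨i, i', hii'⟩ := exists_pair_ne X
  have := hirr (i, i) (i', i) fun z => by rw [hr, hr, hd i (σ i z.1) i' (σ i z.1)]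
  exact hii' (Prod.ext_iff.mp this).1

lemma IsSkewProductForm.exists_mem_closure_apply_eq (hr : IsSkewProductForm σ d r)
    (hind : IsIndecomposable r) (x y : X) : ∃ g ∈ closure (Set.range σ), g x = y := by
  have hfst : ∀ g ∈ permGroup r, ∀ z, (g z).1 ∈ MulAction.orbit (closure (Set.range σ)) z.1 := by
    intro g hg
    induction hg using closure_induction with
    | mem g hg =>
      obtain ⟨⟨i, j⟩, hg⟩ := hg
      rintro ⟨k, l⟩
      rw [hg, hr]
      exact MulAction.mem_orbit k (⟨σ j, subset_closure ⟨j, rfl⟩⟩ : closure (Set.range σ))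
    | one => exact fun z => MulAction.mem_orbit_self z.1
    | mul g g' _ _ ih ih' =>
      intro z
      rw [← MulAction.orbit_eq_iff.mpr (ih' z)]
      exact ih (g' z)
    | inv g _ ih =>
      intro z
      have := ih (g⁻¹ z)
      rw [show g (g⁻¹ z) = z from g.apply_symm_apply z] at this
      exact MulAction.mem_orbit_symm.mp this
  obtain ⟨g, hg, hgxy⟩ := hind (x, x) (y, x)
  obtain ⟨⟨f, hf⟩, hfxy⟩ := hfst g hg (x, x)
  exact ⟨f, hf, hfxy.trans (congrArg Prod.fst hgxy)⟩

end Solutions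

/-- for an indecomposable irretractable solution on `(ℤ/(p))²` of
the special product form, `F = ⟨σ_j⟩` has order `p` if and only if
`W = ⟨d_{i,k}⟩` has order `p`. -/
theorem F_card_p_iff_W_card_p (p : ℕ) [Fact p.Prime]
    (σ : ZMod p → Equiv.Perm (ZMod p)) (d : ZMod p → ZMod p → Equiv.Perm (ZMod p))
    (r : (ZMod p × ZMod p) × (ZMod p × ZMod p) → (ZMod p × ZMod p) × (ZMod p × ZMod p))
    (hr : ∀ i j k l : ZMod p,
      r ((i, j), (k, l)) = ((σ j k, d i (σ j k) l),
        ((σ (d i (σ j k) l))⁻¹ i, (d (σ j k) i)⁻¹ j)))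
    (hsol : IsYBSolution r) (hind : IsIndecomposable r) (hirr : IsIrretractable r) :
    Nat.card ↥(Subgroup.closure (Set.range σ)) = p ↔
    Nat.card ↥(Subgroup.closure {g : Equiv.Perm (ZMod p) | ∃ i k, d i k = g}) = p := by
  have hr : IsSkewProductForm σ d r := hr
  set F := closure (Set.range σ)
  set W := closure {g : Perm (ZMod p) | ∃ i k, d i k = g}
  have hdW : ∀ i m, d i m ∈ W := fun i m => subset_closure ⟨i, m, rfl⟩
  have hfac := hr.mul_eq_mul hsol
  obtain ⟨i, m, i', m', hne⟩ := hr.exists_ne hirr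
  constructor
  · intro hF
    have : IsCyclic F := isCyclic_of_prime_card hF
    have hcomm : ∀ j l, Commute (σ j) (σ l) := fun j l =>
      setLike_mul_comm (s := F) (subset_closure ⟨j, rfl⟩) (subset_closure ⟨l, rfl⟩)
    have hWle : W ≤ shiftSubgroup σ F := (closure_le _).mpr <| by
      rintro _ ⟨a, b, rfl⟩
      exact mem_shiftSubgroup_of_commute_of_factorization σ hcomm (hfac a b)
    have hdvd : Nat.card W ∣ p :=
      (card_dvd_of_le hWle).trans <|
      (card_shiftSubgroup_dvd σ (hr.injective hirr) F).trans (dvd_of_eq hF)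
    refine ((Nat.dvd_prime Fact.out).mp hdvd).resolve_left fun hW1 => hne ?_
    have hbot := eq_bot_of_card_eq W hW1
    exact (mem_bot.mp (hbot ▸ hdW i m)).trans (mem_bot.mp (hbot ▸ hdW i' m')).symm
  · intro hW
    have hcomm := commute_of_factorizations_of_card_eq_prime σ hW (hdW i m) (hdW i' m')
      (inv_mem (hdW m i)) (inv_mem (hdW m' i')) hne (hfac i m) (hfac i' m')
    have : IsMulCommutative F := isMulCommutative_closure <| by
      rintro _ ⟨j, rfl⟩ _ ⟨l, rfl⟩
      exact hcomm j l
    rw [F.card_eq_card_of_isMulCommutative (hr.exists_mem_closure_apply_eq hind), Nat.card_zmod]
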